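/- arXiv:2309.12659 — 2 statements merged into one kernel-verified Lean document; each statement's English description precedes it below -/
import Mathlib

section
/- Let p₁,…,p_d ≥ 0 with ∑ᵢ pᵢ = 1 and let ℓ₁,…,ℓ_d and η > 0 satisfy η·ℓᵢ ∈ [0,1] for all i. Then log(∑ᵢ pᵢ exp(-η ℓᵢ)) ≤ -η ∑ᵢ pᵢ ℓᵢ + η²/2 · ∑ᵢ pᵢ ℓᵢ². -/
open Finset Real

/-- Since `(1 - x + x²/2)(1 + x + x²/2) = 1 + x⁴/4 ≥ 1`, this is the reciprocal of
`1 + x + x²/2 ≤ exp x`. -/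
lemma Real.exp_neg_le_one_sub_add_sq_div_two {x : ℝ} (hx : 0 ≤ x) :
    exp (-x) ≤ 1 - x + x ^ 2 / 2 := by
  have hquad := quadratic_le_exp_of_nonneg hx
  rw [exp_neg, inv_le_iff_one_le_mul₀ (exp_pos x)]
  nlinarith [pow_nonneg hx 4, sq_nonneg (x - 1)]

lemma Finset.sum_mul_pos_of_sum_eq_one {ι : Type*} {s : Finset ι} {p f : ι → ℝ}
    (hp : ∀ i ∈ s, 0 ≤ p i) (hps : ∑ i ∈ s, p i = 1) (hf : ∀ i ∈ s, 0 < f i) :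
    0 < ∑ i ∈ s, p i * f i := by
  obtain ⟨j, hj, hpj⟩ := exists_ne_zero_of_sum_ne_zero (hps.trans_ne one_ne_zero)
  exact sum_pos' (fun i hi => mul_nonneg (hp i hi) (hf i hi).le)
    ⟨j, hj, mul_pos ((hp j hj).lt_of_ne' hpj) (hf j hj)⟩

theorem log_sum_exp_step_general (d : ℕ) (p ℓ : Fin d → ℝ) (η : ℝ)
    (hp : ∀ i, 0 ≤ p i) (hps : ∑ i, p i = 1)
    (hℓ : ∀ i, 0 ≤ η * ℓ i ∧ η * ℓ i ≤ 1) :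
    Real.log (∑ i, p i * Real.exp (-η * ℓ i)) ≤
      -η * ∑ i, p i * ℓ i + η ^ 2 / 2 * ∑ i, p i * ℓ i ^ 2 := by
  have hpos : 0 < ∑ i, p i * exp (-η * ℓ i) :=
    sum_mul_pos_of_sum_eq_one (fun i _ => hp i) hps (fun i _ => exp_pos _)
  calc log (∑ i, p i * exp (-η * ℓ i))
      ≤ ∑ i, p i * exp (-η * ℓ i) - 1 := log_le_sub_one_of_pos hpos
    _ ≤ ∑ i, p i * (1 - η * ℓ i + (η * ℓ i) ^ 2 / 2) - 1 := by
      gcongr with i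
      · exact hp i
      · rw [neg_mul]
        exact exp_neg_le_one_sub_add_sq_div_two (hℓ i).1
    _ = -η * ∑ i, p i * ℓ i + η ^ 2 / 2 * ∑ i, p i * ℓ i ^ 2 := by
      have hterm : ∀ i, p i * (1 - η * ℓ i + (η * ℓ i) ^ 2 / 2) =
          p i - η * (p i * ℓ i) + η ^ 2 / 2 * (p i * ℓ i ^ 2) := fun i => by ring
      simp only [hterm, sum_add_distrib, sum_sub_distrib, ← mul_sum, hps]
      ring

theorem log_sum_exp_step (d : ℕ) (p ℓ : Fin d → ℝ) (η : ℝ) (hη : 0 < η)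
    (hp : ∀ i, 0 ≤ p i) (hps : ∑ i, p i = 1)
    (hℓ : ∀ i, 0 ≤ η * ℓ i ∧ η * ℓ i ≤ 1) :
    Real.log (∑ i, p i * Real.exp (-η * ℓ i)) ≤
      -η * ∑ i, p i * ℓ i + η ^ 2 / 2 * ∑ i, p i * ℓ i ^ 2 :=
  log_sum_exp_step_general d p ℓ η hp hps hℓ
end

section
/- Consider d experts with nonnegative losses ℓ_{t,i} for t = 1,…,T satisfying η·ℓ_{t,i} ∈ [0,1] and ∑ᵢ p_{t,i} ℓ_{t,i}² ≤ 1 at each step, where the exponentially weighted forecaster maintains unnormalized weights w_{1,i} = 1 and w_{t+1,i} = w_{t,i}·exp(-η ℓ_{t,i}), with normalized weights p_{t,i} = w_{t,i} / ∑_j w_{t,j}. Then for every expert k: ∑_{t=1}^T ∑_{i=1}^d p_{t,i} ℓ_{t,i} - ∑_{t=1}^T ℓ_{t,k} ≤ η T / 2 + log(d)/η. -/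
/-!
The potential `Φ t = log ∑ᵢ w t i` starts at `log d` and, since `exp (-x) ≤ 1 - x + x² / 2`
for `x ≥ 0` and `log y ≤ y - 1`, falls in round `t` by at least `η ∑ᵢ p t i ℓ t i - η² / 2`.
It stays above the log-weight `-η ∑ₜ ℓ t k` of any single expert; comparing the two bounds on
`Φ T` and dividing by `η` gives the regret bound.
-/

open Finset Real

theorem Real.log_sum_mul_exp_neg_le {ι : Type*} {s : Finset ι} {p x : ι → ℝ}
    (hp : ∀ i ∈ s, 0 ≤ p i) (hp_sum : ∑ i ∈ s, p i = 1) (hx : ∀ i ∈ s, 0 ≤ x i) :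
    log (∑ i ∈ s, p i * exp (-x i)) ≤
      -∑ i ∈ s, p i * x i + (∑ i ∈ s, p i * x i ^ 2) / 2 := by
  obtain ⟨j, hj, hpj⟩ : ∃ j ∈ s, 0 < p j := exists_lt_of_sum_lt (by simp [hp_sum])
  have hS : 0 < ∑ i ∈ s, p i * exp (-x i) :=
    sum_pos' (fun i hi => mul_nonneg (hp i hi) (exp_pos _).le) ⟨j, hj, mul_pos hpj (exp_pos _)⟩
  calc log (∑ i ∈ s, p i * exp (-x i))
      ≤ ∑ i ∈ s, p i * exp (-x i) - 1 := log_le_sub_one_of_pos hS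
    _ ≤ ∑ i ∈ s, p i * (1 - x i + x i ^ 2 / 2) - 1 := by
      gcongr with i hi
      · exact hp i hi
      · exact exp_neg_le_one_sub_add_sq_div_two (hx i hi)
    _ = -∑ i ∈ s, p i * x i + (∑ i ∈ s, p i * x i ^ 2) / 2 := by
      simp only [mul_add, mul_sub, mul_one, sum_add_distrib, sum_sub_distrib, hp_sum, sum_div,
        mul_div_assoc]
      ring

section ExponentialWeights

variable {ι : Type*} {η : ℝ} {ℓ w p : ℕ → ι → ℝ}

theorem weight_eq_exp_neg_cumulativeLoss (hw0 : ∀ i, w 0 i = 1)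
    (hwrec : ∀ t i, w (t + 1) i = w t i * exp (-η * ℓ t i)) (t : ℕ) (i : ι) :
    w t i = exp (-η * ∑ s ∈ range t, ℓ s i) := by
  induction t with
  | zero => simp [hw0]
  | succ t ih => rw [hwrec, ih, ← exp_add, sum_range_succ, mul_add]

variable [Fintype ι]

theorem sum_weight_succ_div_sum_weight {t : ℕ}
    (hwrec : ∀ i, w (t + 1) i = w t i * exp (-η * ℓ t i))
    (hp : ∀ i, p t i = w t i / ∑ j, w t j) :
    (∑ i, w (t + 1) i) / ∑ i, w t i = ∑ i, p t i * exp (-η * ℓ t i) := by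
  simp only [sum_div, hwrec, hp, div_mul_eq_mul_div]

theorem log_sum_weight_succ_sub_le [Nonempty ι] {t : ℕ} (hwpos : ∀ i, 0 < w t i)
    (hwrec : ∀ i, w (t + 1) i = w t i * exp (-η * ℓ t i))
    (hp : ∀ i, p t i = w t i / ∑ j, w t j) (hℓ : ∀ i, 0 ≤ η * ℓ t i) :
    log (∑ i, w (t + 1) i) - log (∑ i, w t i) ≤
      -η * ∑ i, p t i * ℓ t i + η ^ 2 / 2 * ∑ i, p t i * ℓ t i ^ 2 := by
  have hZ : 0 < ∑ i, w t i := sum_pos (fun i _ => hwpos i) univ_nonempty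
  have hZ' : 0 < ∑ i, w (t + 1) i :=
    sum_pos (fun i _ => by rw [hwrec]; exact mul_pos (hwpos i) (exp_pos _)) univ_nonempty
  have hp_sum : ∑ i, p t i = 1 := by simp only [hp, ← sum_div, div_self hZ.ne']
  rw [← log_div hZ'.ne' hZ.ne', sum_weight_succ_div_sum_weight hwrec hp]
  calc log (∑ i, p t i * exp (-η * ℓ t i))
      ≤ -∑ i, p t i * (η * ℓ t i) + (∑ i, p t i * (η * ℓ t i) ^ 2) / 2 := by
        simpa only [neg_mul] using log_sum_mul_exp_neg_le
          (fun i _ => by rw [hp]; exact div_nonneg (hwpos i).le hZ.le) hp_sum (fun i _ => hℓ i)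
    _ = -η * ∑ i, p t i * ℓ t i + η ^ 2 / 2 * ∑ i, p t i * ℓ t i ^ 2 := by
      simp only [mul_sum, sum_div, ← sum_neg_distrib, ← sum_add_distrib]
      exact sum_congr rfl fun i _ => by ring

end ExponentialWeights

theorem egd_regret_bound_general (d T : ℕ) (η : ℝ) (hη : 0 < η)
    (ℓ : ℕ → Fin d → ℝ) (w p : ℕ → Fin d → ℝ)
    (hw0 : ∀ i, w 0 i = 1)
    (hwrec : ∀ t i, w (t + 1) i = w t i * Real.exp (-η * ℓ t i))
    (hp : ∀ t i, p t i = w t i / ∑ j, w t j)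
    (hℓη : ∀ t, t < T → ∀ i, 0 ≤ η * ℓ t i ∧ η * ℓ t i ≤ 1)
    (hsq : ∀ t, t < T → ∑ i, p t i * ℓ t i ^ 2 ≤ 1) :
    ∀ k : Fin d,
      ∑ t ∈ Finset.range T, ∑ i, p t i * ℓ t i - ∑ t ∈ Finset.range T, ℓ t k ≤
        η * T / 2 + Real.log d / η := by
  intro k
  have : Nonempty (Fin d) := ⟨k⟩
  have hw := weight_eq_exp_neg_cumulativeLoss hw0 hwrec
  have hwpos : ∀ t i, 0 < w t i := fun t i => hw t i ▸ exp_pos _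
  set Φ : ℕ → ℝ := fun t => log (∑ i, w t i)
  have hΦ0 : Φ 0 = log d := by simp [Φ, hw0]
  have hΦT : -η * ∑ t ∈ range T, ℓ t k ≤ Φ T := by
    rw [← log_exp (-η * _), ← hw]
    exact log_le_log (hwpos T k) (single_le_sum (fun i _ => (hwpos T i).le) (mem_univ k))
  have hstep : ∀ t < T, Φ (t + 1) - Φ t ≤ -η * ∑ i, p t i * ℓ t i + η ^ 2 / 2 := fun t ht =>
    (log_sum_weight_succ_sub_le (hwpos t) (hwrec t) (hp t) (fun i => (hℓη t ht i).1)).trans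
      (by gcongr; exact mul_le_of_le_one_right (by positivity) (hsq t ht))
  have htele : Φ T - Φ 0 ≤ ∑ t ∈ range T, (-η * ∑ i, p t i * ℓ t i + η ^ 2 / 2) := by
    rw [← sum_range_sub]
    exact sum_le_sum fun t ht => hstep t (mem_range.1 ht)
  rw [sum_add_distrib, ← mul_sum, sum_const, card_range, nsmul_eq_mul, hΦ0] at htele
  refine le_of_mul_le_mul_left ?_ hη
  rw [mul_add, mul_div_cancel₀ _ hη.ne']
  linarith

theorem egd_regret_bound (d T : ℕ) (η : ℝ) (hη : 0 < η)
    (ℓ : ℕ → Fin d → ℝ) (w p : ℕ → Fin d → ℝ)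
    (hw0 : ∀ i, w 0 i = 1)
    (hwrec : ∀ t i, w (t + 1) i = w t i * Real.exp (-η * ℓ t i))
    (hp : ∀ t i, p t i = w t i / ∑ j, w t j)
    (hℓ0 : ∀ t i, 0 ≤ ℓ t i)
    (hℓη : ∀ t, t < T → ∀ i, 0 ≤ η * ℓ t i ∧ η * ℓ t i ≤ 1)
    (hsq : ∀ t, t < T → ∑ i, p t i * ℓ t i ^ 2 ≤ 1) :
    ∀ k : Fin d,
      ∑ t ∈ Finset.range T, ∑ i, p t i * ℓ t i - ∑ t ∈ Finset.range T, ℓ t k ≤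
        η * T / 2 + Real.log d / η :=
  egd_regret_bound_general d T η hη ℓ w p hw0 hwrec hp hℓη hsq
end
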